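/- arXiv:0706.0960 — 5 statements merged into one kernel-verified Lean document; each statement's English description precedes it below -/
import Mathlib

section
/- Let V be a module over a commutative ring R and let B₁, B₂ : V × V → V be alternating R-bilinear maps, each satisfying the Jacobi identity, and such that B₂ + λB₁ satisfies the Jacobi identity for every scalar λ ∈ R. Call z ∈ V a Casimir of B₁ if B₁(z, x) = 0 for all x ∈ V. Then for any two Casimirs z₁, z₂ of B₁, the element B₂(z₁, z₂) is again a Casimir of B₁; consequently the set of Casimirs of B₁ is a Lie subalgebra of V with respect to the bracket B₂. -/
/-! Since `B₁` is alternating, a Casimir of `B₁` is killed by `B₁` on either side. Hence in the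
Jacobi identity of `B₂ + λ B₁` at `(z₁, z₂, x)`, with `z₁, z₂` Casimirs, every `B₁`-term vanishes
except `λ B₁ (B₂ z₁ z₂) x`, and the `B₂`-terms form the Jacobiator of `B₂`, which vanishes.
Taking `λ = 1` leaves `B₁ (B₂ z₁ z₂) x = 0`. -/

/-- The Jacobi identity for a bilinear bracket `B` on a module `V`. -/
def JacobiIdentity {R V : Type*} [CommRing R] [AddCommGroup V] [Module R V]
    (B : V →ₗ[R] V →ₗ[R] V) : Prop :=
  ∀ x y z : V, B (B x y) z + B (B y z) x + B (B z x) y = 0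

/-- `z` is a Casimir of the bracket `B` if `B z x = 0` for all `x`. -/
def IsCasimir {R V : Type*} [CommRing R] [AddCommGroup V] [Module R V]
    (B : V →ₗ[R] V →ₗ[R] V) (z : V) : Prop :=
  ∀ x : V, B z x = 0

namespace IsCasimir

variable {R V : Type*} [CommRing R] [AddCommGroup V] [Module R V] {B : V →ₗ[R] V →ₗ[R] V}
  {z : V}

theorem apply_right (hB : B.IsAlt) (hz : IsCasimir B z) (x : V) : B x z = 0 :=
  hB.eq_iff.1 (hz x)

theorem jacobiator_add_smul (A : V →ₗ[R] V →ₗ[R] V) (hB : B.IsAlt) (c : R) {z₁ z₂ : V}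
    (h₁ : IsCasimir B z₁) (h₂ : IsCasimir B z₂) (x : V) :
    (A + c • B) ((A + c • B) z₁ z₂) x + (A + c • B) ((A + c • B) z₂ x) z₁
        + (A + c • B) ((A + c • B) x z₁) z₂
      = A (A z₁ z₂) x + A (A z₂ x) z₁ + A (A x z₁) z₂ + c • B (A z₁ z₂) x := by
  simp only [LinearMap.add_apply, LinearMap.smul_apply, h₁ _, h₂ _,
    h₁.apply_right hB, h₂.apply_right hB, smul_zero, add_zero]
  abel

end IsCasimir

theorem casimirs_closed_under_second_bracket_general {R V : Type*} [CommRing R] [AddCommGroup V]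
    [Module R V] (B₁ B₂ : V →ₗ[R] V →ₗ[R] V)
    (hB₁alt : ∀ x : V, B₁ x x = 0)
    (hB₂ : JacobiIdentity B₂)
    (hpencil : ∀ lam : R, JacobiIdentity (B₂ + lam • B₁)) :
    ∀ z₁ z₂ : V, IsCasimir B₁ z₁ → IsCasimir B₁ z₂ → IsCasimir B₁ (B₂ z₁ z₂) := by
  intro z₁ z₂ h₁ h₂ x
  have h := hpencil 1 z₁ z₂ x
  rwa [IsCasimir.jacobiator_add_smul B₂ hB₁alt 1 h₁ h₂, hB₂, zero_add, one_smul] at h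

/-- For a compatible (bi-Hamiltonian) pair of alternating brackets `B₁, B₂`, the bracket `B₂`
of two Casimirs of `B₁` is again a Casimir of `B₁`; hence the set of Casimirs of `B₁` is a
Lie subalgebra with respect to `B₂`. -/
theorem casimirs_closed_under_second_bracket {R V : Type*} [CommRing R] [AddCommGroup V]
    [Module R V] (B₁ B₂ : V →ₗ[R] V →ₗ[R] V)
    (hB₁alt : ∀ x : V, B₁ x x = 0) (hB₂alt : ∀ x : V, B₂ x x = 0)
    (hB₁ : JacobiIdentity B₁) (hB₂ : JacobiIdentity B₂)
    (hpencil : ∀ lam : R, JacobiIdentity (B₂ + lam • B₁)) :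
    ∀ z₁ z₂ : V, IsCasimir B₁ z₁ → IsCasimir B₁ z₂ → IsCasimir B₁ (B₂ z₁ z₂) :=
  casimirs_closed_under_second_bracket_general B₁ B₂ hB₁alt hB₂ hpencil
end

section
/- Let V be a finite-dimensional vector space over ℝ, let P₁, P₂ : V* → V be skew-symmetric linear maps, and let k₁, …, k_n ∈ V* satisfy P₁(k_i) = 0 for all i. Put S = {x ∈ V : k_i(x) = 0 for all i}, D = span{P₂(k₁), …, P₂(k_n)}, E = D ∩ S, and let W ⊆ S be a subspace with S = E ⊕ W (that is, E ∩ W = 0 and E + W = S). Then for every λ ∈ ℝ, writing P_λ = P₂ + λP₁, one has W ∩ P_λ(W°) = 0. -/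
/-!
Write `P = P₂ + λ P₁`, a skew map with `P kᵢ = P₂ kᵢ`, and let `v ∈ W°` with `P v ∈ W ⊆ S`.
By skew-symmetry `kᵢ (P v) = 0` says `v (P₂ kᵢ) = 0`, so `v` kills `D ⊇ E` as well as `W`, hence
all of `S = E ⊕ W`. A covector vanishing on the common kernel of the `kᵢ` is a combination of
them, so `P v` is the same combination of the `P₂ kᵢ` and lies in `D`. Thus
`P v ∈ D ∩ S ∩ W = E ∩ W = 0`.
-/

open Module Submodule

section

variable {𝕜 V : Type*} [Field 𝕜] [AddCommGroup V] [Module 𝕜 V]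

theorem skew_add_smul {P₁ P₂ : Dual 𝕜 V →ₗ[𝕜] V}
    (hP₁ : ∀ α β : Dual 𝕜 V, α (P₁ β) = - β (P₁ α))
    (hP₂ : ∀ α β : Dual 𝕜 V, α (P₂ β) = - β (P₂ α)) (c : 𝕜) (α β : Dual 𝕜 V) :
    α ((P₂ + c • P₁) β) = - β ((P₂ + c • P₁) α) := by
  simp only [LinearMap.add_apply, LinearMap.smul_apply, map_add, map_smul, smul_eq_mul,
    hP₁ α, hP₂ α]
  ring

theorem apply_mem_iInf_ker_iff_mem_dualAnnihilator {ι : Type*} {P : Dual 𝕜 V →ₗ[𝕜] V}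
    (hP : ∀ α β : Dual 𝕜 V, α (P β) = - β (P α)) (k : ι → Dual 𝕜 V) (v : Dual 𝕜 V) :
    P v ∈ ⨅ i, LinearMap.ker (k i) ↔ v ∈ (span 𝕜 (Set.range (P ∘ k))).dualAnnihilator := by
  rw [← SetLike.mem_coe (x := v), coe_dualAnnihilator_span, Submodule.mem_iInf]
  simp [Set.range_subset_iff, hP _ v]

end

theorem transversal_inter_pencil_annihilator_eq_bot_general (V : Type*) [AddCommGroup V] [Module ℝ V]
    (P₁ P₂ : Module.Dual ℝ V →ₗ[ℝ] V)
    (hP₁skew : ∀ α β : Module.Dual ℝ V, α (P₁ β) = - β (P₁ α))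
    (hP₂skew : ∀ α β : Module.Dual ℝ V, α (P₂ β) = - β (P₂ α))
    (n : ℕ) (k : Fin n → Module.Dual ℝ V) (hk : ∀ i, P₁ (k i) = 0)
    (S : Submodule ℝ V) (hS : S = ⨅ i, LinearMap.ker (k i))
    (D : Submodule ℝ V) (hD : D = Submodule.span ℝ (Set.range fun i => P₂ (k i)))
    (E : Submodule ℝ V) (hE : E = D ⊓ S)
    (W : Submodule ℝ V) (hEW : E ⊓ W = ⊥) (hEWsup : E ⊔ W = S)
    (lam : ℝ) (v : Module.Dual ℝ V)
    (hv_ann : ∀ w ∈ W, v w = 0) (hv_mem : (P₂ + lam • P₁) v ∈ W) :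
    (P₂ + lam • P₁) v = 0 := by
  set P := P₂ + lam • P₁
  have hDP : D = span ℝ (Set.range (P ∘ k)) := by
    rw [hD]
    congr! 3 with i
    simp [P, hk i]
  have hPvS : P v ∈ S := hEWsup ▸ mem_sup_right hv_mem
  have hvD : v ∈ D.dualAnnihilator := by
    rw [hDP, ← apply_mem_iInf_ker_iff_mem_dualAnnihilator (skew_add_smul hP₁skew hP₂skew lam), ← hS]
    exact hPvS
  have hvS : v ∈ S.dualAnnihilator := by
    rw [← hEWsup, dualAnnihilator_sup_eq]
    exact ⟨dualAnnihilator_anti (hE ▸ inf_le_left) hvD, (mem_dualAnnihilator v).2 hv_ann⟩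
  have hvk : v ∈ span ℝ (Set.range k) :=
    mem_span_of_iInf_ker_le_ker (hS ▸ fun x hx => (mem_dualAnnihilator v).1 hvS x hx)
  have hPvD : P v ∈ D := by
    rw [hDP, Set.range_comp]
    exact apply_mem_span_image_of_mem_span P hvk
  exact (mem_bot ℝ).1 (hEW ▸ ⟨hE ▸ ⟨hPvD, hPvS⟩, hv_mem⟩)

/-- Pointwise content of the first part of Lemma 2.4: with `S` the common kernel of the
Casimir differentials `kᵢ` of `P₁`, `D` the span of the vector fields `P₂ kᵢ`, `E = D ∩ S`,
and `W ⊆ S` a complement of `E` in `S`, one has `W ∩ P_λ(W°) = 0` for every `λ`. -/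
theorem transversal_inter_pencil_annihilator_eq_bot (V : Type*) [AddCommGroup V] [Module ℝ V]
    [FiniteDimensional ℝ V]
    (P₁ P₂ : Module.Dual ℝ V →ₗ[ℝ] V)
    (hP₁skew : ∀ α β : Module.Dual ℝ V, α (P₁ β) = - β (P₁ α))
    (hP₂skew : ∀ α β : Module.Dual ℝ V, α (P₂ β) = - β (P₂ α))
    (n : ℕ) (k : Fin n → Module.Dual ℝ V) (hk : ∀ i, P₁ (k i) = 0)
    (S : Submodule ℝ V) (hS : S = ⨅ i, LinearMap.ker (k i))
    (D : Submodule ℝ V) (hD : D = Submodule.span ℝ (Set.range fun i => P₂ (k i)))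
    (E : Submodule ℝ V) (hE : E = D ⊓ S)
    (W : Submodule ℝ V) (hWS : W ≤ S) (hEW : E ⊓ W = ⊥) (hEWsup : E ⊔ W = S)
    (lam : ℝ) (v : Module.Dual ℝ V)
    (hv_ann : ∀ w ∈ W, v w = 0) (hv_mem : (P₂ + lam • P₁) v ∈ W) :
    (P₂ + lam • P₁) v = 0 :=
  transversal_inter_pencil_annihilator_eq_bot_general V P₁ P₂ hP₁skew hP₂skew n k hk S hS D hD E hE
    W hEW hEWsup lam v hv_ann hv_mem
end

section
/- Let V be a finite-dimensional vector space over ℝ, let P : V* → V be a skew-symmetric linear map, and let W ⊆ V be a subspace with W ∩ P(W°) = 0. Then: (i) for every linear functional ξ : W → ℝ there exists v ∈ V* whose restriction to W equals ξ and such that P(v) ∈ W; (ii) if v₁, v₂ ∈ V* both restrict to ξ on W and satisfy P(v₁) ∈ W and P(v₂) ∈ W, then P(v₁) = P(v₂). Hence the assignment ξ ↦ P(v) gives a well-defined linear map W* → W (the reduced Poisson tensor). -/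
/-!
If `β` annihilates both `W` and `P(W°)`, skew-symmetry gives `α (P β) = -β (P α) = 0` for all
`α ∈ W°`, so `P β ∈ W°° = W`, and transversality forces `P β = 0`; skew-symmetry again gives
`β (P v) = 0` for every `v`. Hence `range P ⊆ W + P(W°)`, so any extension `v₀` of `ξ` can be
corrected by some `α ∈ W°` to get `P (v₀ - α) ∈ W`. Two such lifts differ by an element of `W°`
whose image lies in `W`, hence in the kernel of `P`. The reduced tensor is `P` composed with a
linear section of the restriction map from the admissible lifts onto `W*`.
-/

open Module

namespace LinearMap

theorem map_eq_map_of_eqOn_of_mem {R V : Type*} [CommRing R] [AddCommGroup V] [Module R V]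
    {P : Dual R V →ₗ[R] V} {W : Submodule R V}
    (hW : ∀ v : Dual R V, (∀ w ∈ W, v w = 0) → P v ∈ W → P v = 0)
    {v₁ v₂ : Dual R V} (h : ∀ w : W, v₁ (w : V) = v₂ (w : V)) (h₁ : P v₁ ∈ W) (h₂ : P v₂ ∈ W) :
    P v₁ = P v₂ := by
  have hsub : P (v₁ - v₂) = 0 := by
    refine hW _ (fun w hw => sub_eq_zero.mpr (h ⟨w, hw⟩)) ?_
    rw [map_sub]
    exact W.sub_mem h₁ h₂
  rwa [map_sub, sub_eq_zero] at hsub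

variable {K V : Type*} [Field K] [AddCommGroup V] [Module K V]
  {P : Dual K V →ₗ[K] V} {W : Submodule K V}

theorem map_mem_of_mem_dualAnnihilator_map (hP : ∀ α β : Dual K V, α (P β) = -β (P α))
    {β : Dual K V} (hβ : β ∈ (W.dualAnnihilator.map P).dualAnnihilator) : P β ∈ W := by
  rw [← Subspace.dualAnnihilator_dualCoannihilator_eq (W := W), Submodule.mem_dualCoannihilator]
  intro α hα
  rw [hP, (Submodule.mem_dualAnnihilator _).mp hβ _ (Submodule.mem_map_of_mem hα), neg_zero]

theorem range_le_sup_map_dualAnnihilator (hP : ∀ α β : Dual K V, α (P β) = -β (P α))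
    (hW : ∀ v : Dual K V, (∀ w ∈ W, v w = 0) → P v ∈ W → P v = 0) :
    range P ≤ W ⊔ W.dualAnnihilator.map P := by
  rintro _ ⟨v, rfl⟩
  rw [← Subspace.dualAnnihilator_dualCoannihilator_eq (W := W ⊔ _),
    Submodule.mem_dualCoannihilator]
  intro β hβ
  rw [Submodule.dualAnnihilator_sup_eq] at hβ
  have hPβ : P β = 0 := hW β ((Submodule.mem_dualAnnihilator _).mp hβ.1)
    (map_mem_of_mem_dualAnnihilator_map hP hβ.2)
  rw [hP, hPβ, map_zero, neg_zero]

theorem exists_extension_map_mem (hP : ∀ α β : Dual K V, α (P β) = -β (P α))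
    (hW : ∀ v : Dual K V, (∀ w ∈ W, v w = 0) → P v ∈ W → P v = 0) (ξ : Dual K W) :
    ∃ v : Dual K V, (∀ w : W, v (w : V) = ξ w) ∧ P v ∈ W := by
  have hlift := range_le_sup_map_dualAnnihilator hP hW (mem_range_self P (Subspace.dualLift W ξ))
  obtain ⟨w, hw, _, ⟨α, hα, rfl⟩, hsum⟩ := Submodule.mem_sup.mp hlift
  refine ⟨Subspace.dualLift W ξ - α, fun x => ?_, ?_⟩
  · rw [sub_apply, (Submodule.mem_dualAnnihilator α).mp hα x x.2, sub_zero,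
      Subspace.dualLift_of_subtype]
  · rwa [map_sub, ← hsum, add_sub_cancel_right]

theorem exists_linearMap_eq_map_of_extension (hP : ∀ α β : Dual K V, α (P β) = -β (P α))
    (hW : ∀ v : Dual K V, (∀ w ∈ W, v w = 0) → P v ∈ W → P v = 0) :
    ∃ ρ : Dual K W →ₗ[K] V, (∀ ξ : Dual K W, ρ ξ ∈ W) ∧
      ∀ (ξ : Dual K W) (v : Dual K V), (∀ w : W, v (w : V) = ξ w) → P v ∈ W → P v = ρ ξ := by
  let S := W.comap P
  have hsurj : range (W.dualRestrict ∘ₗ S.subtype) = ⊤ := by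
    refine range_eq_top.mpr fun ξ => ?_
    obtain ⟨v, hv, hPv⟩ := exists_extension_map_mem hP hW ξ
    exact ⟨⟨v, hPv⟩, LinearMap.ext hv⟩
  obtain ⟨σ, hσ⟩ := (W.dualRestrict ∘ₗ S.subtype).exists_rightInverse_of_surjective hsurj
  have hσξ (ξ : Dual K W) (w : W) : (σ ξ : Dual K V) w = ξ w :=
    LinearMap.congr_fun (LinearMap.congr_fun hσ ξ) w
  exact ⟨P ∘ₗ S.subtype ∘ₗ σ, fun ξ => (σ ξ).2, fun ξ v hv hPv =>
    map_eq_map_of_eqOn_of_mem hW (fun w => (hv w).trans (hσξ ξ w).symm) hPv (σ ξ).2⟩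

end LinearMap

theorem reduced_poisson_tensor_well_defined_general (V : Type*) [AddCommGroup V] [Module ℝ V]
    (P : Module.Dual ℝ V →ₗ[ℝ] V)
    (hPskew : ∀ α β : Module.Dual ℝ V, α (P β) = - β (P α))
    (W : Submodule ℝ V)
    (hW : ∀ v : Module.Dual ℝ V, (∀ w ∈ W, v w = 0) → P v ∈ W → P v = 0) :
    (∀ ξ : Module.Dual ℝ W, ∃ v : Module.Dual ℝ V,
        (∀ w : W, v (w : V) = ξ w) ∧ P v ∈ W) ∧
    (∀ v₁ v₂ : Module.Dual ℝ V, (∀ w : W, v₁ (w : V) = v₂ (w : V)) →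
        P v₁ ∈ W → P v₂ ∈ W → P v₁ = P v₂) ∧
    (∃ ρ : Module.Dual ℝ W →ₗ[ℝ] V, (∀ ξ : Module.Dual ℝ W, ρ ξ ∈ W) ∧
        ∀ (ξ : Module.Dual ℝ W) (v : Module.Dual ℝ V),
          (∀ w : W, v (w : V) = ξ w) → P v ∈ W → P v = ρ ξ) :=
  ⟨LinearMap.exists_extension_map_mem hPskew hW,
    fun _ _ => LinearMap.map_eq_map_of_eqOn_of_mem hW,
    LinearMap.exists_linearMap_eq_map_of_extension hPskew hW⟩

/-- Pointwise content of Lemma 2.5 (Self-Consistency): if `P` is skew-symmetric and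
`W ∩ P(W°) = 0`, then every functional `ξ` on `W` extends to a covector `v` on `V` with
`P v ∈ W`, the value `P v` is independent of the chosen extension, and the resulting
assignment `ξ ↦ P v` is a well-defined linear map `W* → W` (the reduced Poisson tensor). -/
theorem reduced_poisson_tensor_well_defined (V : Type*) [AddCommGroup V] [Module ℝ V]
    [FiniteDimensional ℝ V]
    (P : Module.Dual ℝ V →ₗ[ℝ] V)
    (hPskew : ∀ α β : Module.Dual ℝ V, α (P β) = - β (P α))
    (W : Submodule ℝ V)
    (hW : ∀ v : Module.Dual ℝ V, (∀ w ∈ W, v w = 0) → P v ∈ W → P v = 0) :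
    (∀ ξ : Module.Dual ℝ W, ∃ v : Module.Dual ℝ V,
        (∀ w : W, v (w : V) = ξ w) ∧ P v ∈ W) ∧
    (∀ v₁ v₂ : Module.Dual ℝ V, (∀ w : W, v₁ (w : V) = v₂ (w : V)) →
        P v₁ ∈ W → P v₂ ∈ W → P v₁ = P v₂) ∧
    (∃ ρ : Module.Dual ℝ W →ₗ[ℝ] V, (∀ ξ : Module.Dual ℝ W, ρ ξ ∈ W) ∧
        ∀ (ξ : Module.Dual ℝ W) (v : Module.Dual ℝ V),
          (∀ w : W, v (w : V) = ξ w) → P v ∈ W → P v = ρ ξ) :=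
  reduced_poisson_tensor_well_defined_general V P hPskew W hW
end

section
/- Let 𝔤 be a finite-dimensional Lie algebra over ℂ with a ℤ-grading 𝔤 = ⊕_{i∈ℤ} 𝔤_i, let e ∈ 𝔤₂ be a good element, and let 𝒞 be a graded transversal subspace for e. Then for every loop q in 𝒞 and every loop ṡ in 𝔟⁻ = ⊕_{i≤0} 𝔤_i there exist a unique loop v in 𝔤⁻ = ⊕_{i≤−2} 𝔤_i and a unique loop w in 𝒞 such that ṡ(x) = v′(x) + ⁅q(x) + e, v(x)⁆ + w(x) for all x ∈ ℝ. -/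
set_option linter.unusedSectionVars false
set_option maxHeartbeats 1000000

/-- A loop in a subset `V` of a normed space `L`: a `C^∞` map `ℝ → L`, `2π`-periodic,
taking values in `V`. -/
def IsLoopIn {L : Type*} [NormedAddCommGroup L] [NormedSpace ℝ L]
    (V : Set L) (f : ℝ → L) : Prop :=
  ContDiff ℝ (⊤ : ℕ∞) f ∧ (∀ x : ℝ, f (x + 2 * Real.pi) = f x) ∧ ∀ x : ℝ, f x ∈ V

namespace TransversalAux

open DirectSum

section analytic

variable {L : Type*} [NormedAddCommGroup L] [NormedSpace ℂ L] [FiniteDimensional ℂ L]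

lemma deriv_mem_aux (p : Submodule ℂ L) {f : ℝ → L} (hf : ∀ t, f t ∈ p) (x : ℝ) :
    deriv f x ∈ p := by
  by_cases h : DifferentiableAt ℝ f x
  · have hd := hasDerivAt_iff_tendsto_slope.mp h.hasDerivAt
    have hc : IsClosed (p : Set L) := Submodule.closed_of_finiteDimensional p
    refine hc.mem_of_tendsto hd (Filter.Eventually.of_forall fun y => ?_)
    simpa [slope] using p.smul_of_tower_mem _ (p.sub_mem (hf y) (hf x))
  · rw [deriv_zero_of_not_differentiableAt h]; exact p.zero_mem

lemma bilin_contDiff (B : L →ₗ[ℂ] L →ₗ[ℂ] L) :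
    ContDiff ℝ (⊤ : ℕ∞) (fun p : L × L => B p.1 p.2) := by
  set b2 : L →ₗ[ℂ] (L →L[ℂ] L) :=
    (LinearMap.toContinuousLinearMap : (L →ₗ[ℂ] L) ≃ₗ[ℂ] (L →L[ℂ] L)).toLinearMap.comp B with hb2
  set bc : L →L[ℂ] (L →L[ℂ] L) := b2.toContinuousLinearMap with hbc
  have happly : ∀ x y, bc x y = B x y := fun x y => rfl
  have hbb : IsBoundedBilinearMap ℝ (fun p : L × L => B p.1 p.2) := by
    refine ⟨fun x x' y => by rw [map_add, LinearMap.add_apply],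
      fun r x y => by rw [LinearMap.map_smul_of_tower, LinearMap.smul_apply],
      fun x y y' => by rw [map_add],
      fun r x y => by rw [LinearMap.map_smul_of_tower],
      ⟨‖bc‖ + 1, by positivity, fun x y => ?_⟩⟩
    calc ‖B x y‖ = ‖bc x y‖ := by rw [happly]
    _ ≤ ‖bc‖ * ‖x‖ * ‖y‖ := bc.le_opNorm₂ x y
    _ ≤ (‖bc‖ + 1) * ‖x‖ * ‖y‖ := by nlinarith [norm_nonneg x, norm_nonneg y]
  exact hbb.contDiff

lemma smooth_bapply (B : L →ₗ[ℂ] L →ₗ[ℂ] L) {q v : ℝ → L}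
    (hq : ContDiff ℝ (⊤ : ℕ∞) q) (hv : ContDiff ℝ (⊤ : ℕ∞) v) :
    ContDiff ℝ (⊤ : ℕ∞) (fun x => B (q x) (v x)) :=
  (bilin_contDiff B).comp (hq.prodMk hv)

lemma clm_smooth (α : L →L[ℂ] L) {v : ℝ → L} (hv : ContDiff ℝ (⊤ : ℕ∞) v) :
    ContDiff ℝ (⊤ : ℕ∞) (fun x => α (v x)) :=
  (α.contDiff.restrict_scalars ℝ).comp hv

lemma deriv_smooth {v : ℝ → L} (hv : ContDiff ℝ (⊤ : ℕ∞) v) : ContDiff ℝ (⊤ : ℕ∞) (deriv v) := by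
  exact (contDiff_infty_iff_deriv.mp hv).2

lemma deriv_periodic {v : ℝ → L} {c : ℝ} (hv : ∀ x, v (x + c) = v x) (x : ℝ) :
    deriv v (x + c) = deriv v x := by
  rw [← deriv_comp_add_const]
  congr 1
  funext y
  exact hv y

end analytic

section graded

variable {L : Type*} [AddCommGroup L] [Module ℂ L]
variable (g : ℤ → Submodule ℂ L) [Decomposition g]

lemma mem_biSup_iff (d : ℤ) (x : L) :
    x ∈ (⨆ i ≤ d, g i) ↔ ∀ j, d < j → (decompose g x j : L) = 0 := by
  constructor
  · intro hx j hj
    rw [iSup_subtype'] at hx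
    induction hx using Submodule.iSup_induction' with
    | mem i y hy =>
      exact decompose_of_mem_ne g hy (by rintro rfl; exact absurd i.2 (not_le.mpr hj))
    | zero => simp
    | add y z _ _ hy hz => rw [decompose_add]; simp [hy, hz]
  · intro hx
    classical
    rw [← DirectSum.sum_support_decompose g x]
    apply Submodule.sum_mem
    intro i _
    by_cases hi : i ≤ d
    · exact Submodule.mem_iSup_of_mem i (Submodule.mem_iSup_of_mem hi (decompose g x i).2)
    · rw [hx i (not_le.mp hi)]; exact Submodule.zero_mem _

lemma biSup_mono' {d d' : ℤ} (h : d ≤ d') : (⨆ i ≤ d, g i) ≤ ⨆ i ≤ d', g i :=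
  biSup_mono fun _ hi => hi.trans h

lemma decompose_mem_of_graded (C : Submodule ℂ L)
    (hCgraded : C = ⨆ i ≤ (0 : ℤ), C ⊓ g i) {c : L} (hc : c ∈ C) (j : ℤ) :
    (decompose g c j : L) ∈ C := by
  rw [hCgraded, iSup_subtype'] at hc
  induction hc using Submodule.iSup_induction' with
  | mem i y hy =>
    by_cases h : (i : ℤ) = j
    · subst h; rw [decompose_of_mem_same g hy.2]; exact hCgraded ▸ hy.1
    · rw [decompose_of_mem_ne g hy.2 h]; exact Submodule.zero_mem _
  | zero => simp
  | add y z _ _ hy hz =>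
    rw [decompose_add]
    exact Submodule.add_mem _ hy hz

variable (B : L →ₗ[ℂ] L →ₗ[ℂ] L)
    (hbr : ∀ i j : ℤ, ∀ x ∈ g i, ∀ y ∈ g j, B x y ∈ g (i + j))

include hbr

lemma decompose_Be (e : L) (he : e ∈ g 2) (x : L) (j : ℤ) :
    (decompose g (B e x) j : L) = B e (decompose g x (j - 2) : L) := by
  have htop : x ∈ (⊤ : Submodule ℂ L) := trivial
  rw [← (Decomposition.isInternal g).submodule_iSup_eq_top] at htop
  induction htop using Submodule.iSup_induction' with
  | mem i y hy =>
    have hBy : B e y ∈ g (2 + i) := hbr 2 i e he y hy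
    by_cases h : j = 2 + i
    · subst h
      rw [decompose_of_mem_same g hBy,
        decompose_of_mem_same g (show y ∈ g (2 + i - 2) by simpa using hy)]
    · rw [decompose_of_mem_ne g hBy (Ne.symm h),
        decompose_of_mem_ne g hy (show i ≠ j - 2 by omega), map_zero]
  | zero => simp
  | add y z _ _ hy hz => rw [map_add, decompose_add]; simp [hy, hz]

lemma Bgrade (a b : ℤ) {x y : L} (hx : x ∈ ⨆ i ≤ a, g i) (hy : y ∈ ⨆ i ≤ b, g i) :
    B x y ∈ ⨆ i ≤ a + b, g i := by
  rw [iSup_subtype'] at hx hy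
  induction hx using Submodule.iSup_induction' with
  | mem i u hu =>
    induction hy using Submodule.iSup_induction' with
    | mem k w hw =>
      exact Submodule.mem_iSup_of_mem (i + k) (Submodule.mem_iSup_of_mem
        (add_le_add i.2 k.2) (hbr i k u hu w hw))
    | zero => simp
    | add y z _ _ h1 h2 => rw [map_add]; exact Submodule.add_mem _ h1 h2
  | zero => simp
  | add u v _ _ h1 h2 => rw [map_add, LinearMap.add_apply]; exact Submodule.add_mem _ h1 h2

variable (e : L) (he : e ∈ g 2)
    (hgood : ∀ j : ℤ, j ≤ -1 → ∀ x ∈ g j, B e x = 0 → x = 0)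
    (C : Submodule ℂ L)
    (hCgraded : C = ⨆ i ≤ (0 : ℤ), C ⊓ g i)
    (hCdisj : Submodule.map (B e) (⨆ i ≤ (-2 : ℤ), g i) ⊓ C = ⊥)

include he hgood hCgraded hCdisj

lemma keyA (d : ℤ) {a c : L} (ha : a ∈ ⨆ i ≤ (-2 : ℤ), g i) (hc : c ∈ C)
    (h : B e a + c ∈ ⨆ i ≤ d, g i) :
    a ∈ (⨆ i ≤ d - 2, g i) ∧ c ∈ (⨆ i ≤ d, g i) := by
  have key : ∀ j, d < j → (decompose g a (j - 2) : L) = 0 ∧ (decompose g c j : L) = 0 := by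
    intro j hj
    have h0 : (decompose g (B e a + c) j : L) = 0 := (mem_biSup_iff g d _).mp h j hj
    rw [decompose_add, DirectSum.add_apply, Submodule.coe_add,
      decompose_Be g B hbr e he] at h0
    have hcC : (decompose g c j : L) ∈ C := decompose_mem_of_graded g C hCgraded hc j
    by_cases hjle : j - 2 ≤ -2
    · have haj : (decompose g a (j - 2) : L) ∈ (⨆ i ≤ (-2 : ℤ), g i) :=
        Submodule.mem_iSup_of_mem (j - 2)
          (Submodule.mem_iSup_of_mem hjle (decompose g a (j - 2)).2)
      have hmem : B e (decompose g a (j - 2) : L) ∈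
          Submodule.map (B e) (⨆ i ≤ (-2 : ℤ), g i) ⊓ C := by
        refine ⟨⟨_, haj, rfl⟩, ?_⟩
        have : B e (decompose g a (j - 2) : L) = -(decompose g c j : L) := by
          linear_combination (norm := abel) h0
        rw [this]; exact C.neg_mem hcC
      rw [hCdisj, Submodule.mem_bot] at hmem
      have hz : (decompose g a (j - 2) : L) = 0 :=
        hgood (j - 2) (by omega) _ (decompose g a (j - 2)).2 hmem
      refine ⟨hz, ?_⟩
      rw [hz, map_zero, zero_add] at h0; exact h0
    · have hz : (decompose g a (j - 2) : L) = 0 :=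
        (mem_biSup_iff g (-2) a).mp ha (j - 2) (by omega)
      refine ⟨hz, ?_⟩
      rw [hz, map_zero, zero_add] at h0; exact h0
  constructor
  · rw [mem_biSup_iff]
    intro j hj
    have h2 : j = j + 2 - 2 := by omega
    rw [h2]
    exact (key (j + 2) (by omega)).1
  · rw [mem_biSup_iff]
    exact fun j hj => (key j hj).2

end graded

section alphagamma

variable {L : Type*} [NormedAddCommGroup L] [NormedSpace ℂ L] [FiniteDimensional ℂ L]
variable (g : ℤ → Submodule ℂ L) [Decomposition g]
variable (B : L →ₗ[ℂ] L →ₗ[ℂ] L) (e : L) (C : Submodule ℂ L)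
variable (hinj : ∀ a ∈ (⨆ i ≤ (-2 : ℤ), g i), ∀ c ∈ C, B e a + c = 0 → a = 0 ∧ c = 0)
variable (hCsup : Submodule.map (B e) (⨆ i ≤ (-2 : ℤ), g i) ⊔ C = ⨆ i ≤ (0 : ℤ), g i)

include hinj hCsup in
lemma exists_alpha_gamma : ∃ α γ : L →L[ℂ] L,
    (∀ u, α u ∈ (⨆ i ≤ (-2 : ℤ), g i)) ∧ (∀ u, γ u ∈ C) ∧
    (∀ u ∈ (⨆ i ≤ (0 : ℤ), g i), B e (α u) + γ u = u) := by
  set Km2 := (⨆ i ≤ (-2 : ℤ), g i) with hKm2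
  set K0 := (⨆ i ≤ (0 : ℤ), g i) with hK0
  set A : (↥Km2 × ↥C) →ₗ[ℂ] L :=
    ((B e).comp Km2.subtype).comp (LinearMap.fst ℂ _ _) +
      C.subtype.comp (LinearMap.snd ℂ _ _) with hA
  have hAapply : ∀ p : ↥Km2 × ↥C, A p = B e (p.1 : L) + (p.2 : L) := fun p => rfl
  have hrange : ∀ p : ↥Km2 × ↥C, A p ∈ K0 := by
    intro p
    rw [hAapply, ← hCsup]
    exact Submodule.add_mem _ (Submodule.mem_sup_left ⟨_, p.1.2, rfl⟩)
      (Submodule.mem_sup_right p.2.2)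
  set A' : (↥Km2 × ↥C) →ₗ[ℂ] ↥K0 := A.codRestrict K0 hrange with hA'
  have hbij : Function.Bijective A' := by
    constructor
    · intro p q hpq
      have h0 : A (p - q) = 0 := by
        have : A p = A q := congrArg Subtype.val hpq
        rw [map_sub, this, sub_self]
      rw [hAapply] at h0
      obtain ⟨h1, h2⟩ := hinj _ (p - q).1.2 _ (p - q).2.2 h0
      have : p - q = 0 := by
        apply Prod.ext <;> [exact Subtype.ext h1; exact Subtype.ext h2]
      exact sub_eq_zero.mp this
    · rintro ⟨u, hu⟩
      rw [← hCsup] at hu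
      obtain ⟨y, hy, z, hz, hyz⟩ := Submodule.mem_sup.mp hu
      obtain ⟨a, ha, rfl⟩ := hy
      refine ⟨(⟨a, ha⟩, ⟨z, hz⟩), ?_⟩
      apply Subtype.ext
      exact hyz
  set E := LinearEquiv.ofBijective A' hbij with hE
  obtain ⟨K', hK'⟩ := Submodule.exists_isCompl K0
  set p : L →ₗ[ℂ] ↥K0 := K0.linearProjOfIsCompl K' hK' with hp
  set F : L →ₗ[ℂ] (↥Km2 × ↥C) := E.symm.toLinearMap.comp p with hF
  set αl : L →ₗ[ℂ] L := Km2.subtype.comp ((LinearMap.fst ℂ _ _).comp F) with hαl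
  set γl : L →ₗ[ℂ] L := C.subtype.comp ((LinearMap.snd ℂ _ _).comp F) with hγl
  refine ⟨αl.toContinuousLinearMap, γl.toContinuousLinearMap, fun u => (F u).1.2,
    fun u => (F u).2.2, ?_⟩
  intro u hu
  show B e ((F u).1 : L) + ((F u).2 : L) = u
  have hpu : p u = ⟨u, hu⟩ := Submodule.linearProjOfIsCompl_apply_left hK' ⟨u, hu⟩
  have : A' (E.symm ⟨u, hu⟩) = ⟨u, hu⟩ := E.apply_symm_apply ⟨u, hu⟩
  have h2 : A (E.symm ⟨u, hu⟩) = u := congrArg Subtype.val this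
  rw [hAapply] at h2
  simpa [hF, hpu] using h2

end alphagamma

end TransversalAux

open TransversalAux DirectSum in
/-- Lemma 3.5: the submanifold `Q = e + 𝔏𝒞` is transversal to the distribution
`E = P₂(𝔏𝔤⁻)` on `S = e + 𝔏𝔟⁻`.  Here the finite-dimensional complex Lie algebra `𝔤` is a
normed space `L` whose Lie bracket is an alternating bilinear map `B` satisfying the Jacobi
identity, graded by `g : ℤ → Submodule ℂ L`, with good element `e ∈ g 2` and graded
transversal subspace `𝒞 = C` (so `𝔟⁻ = (ad e)(𝔤⁻) ⊕ C`).  Every loop `ṡ` in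
`𝔟⁻ = ⊕_{i ≤ 0} gᵢ` decomposes uniquely as `ṡ = v′ + ⁅q + e, v⁆ + w` with `v` a loop in
`𝔤⁻ = ⊕_{i ≤ -2} gᵢ` and `w` a loop in `C`. -/
theorem transversal_decomposition_unique {L : Type*} [NormedAddCommGroup L] [NormedSpace ℂ L]
    [FiniteDimensional ℂ L]
    (B : L →ₗ[ℂ] L →ₗ[ℂ] L)
    (hBalt : ∀ x : L, B x x = 0)
    (hBjac : ∀ x y z : L, B (B x y) z + B (B y z) x + B (B z x) y = 0)
    (g : ℤ → Submodule ℂ L) (hg : DirectSum.IsInternal g)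
    (hbr : ∀ i j : ℤ, ∀ x ∈ g i, ∀ y ∈ g j, B x y ∈ g (i + j))
    (e : L) (he : e ∈ g 2)
    (hgood : ∀ j : ℤ, j ≤ -1 → ∀ x ∈ g j, B e x = 0 → x = 0)
    (C : Submodule ℂ L) (hCle : C ≤ ⨆ i ≤ (0 : ℤ), g i)
    (hCgraded : C = ⨆ i ≤ (0 : ℤ), C ⊓ g i)
    (hCdisj : Submodule.map (B e) (⨆ i ≤ (-2 : ℤ), g i) ⊓ C = ⊥)
    (hCsup : Submodule.map (B e) (⨆ i ≤ (-2 : ℤ), g i) ⊔ C = ⨆ i ≤ (0 : ℤ), g i)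
    (q : ℝ → L) (hq : IsLoopIn (↑C : Set L) q)
    (s : ℝ → L) (hs : IsLoopIn (↑(⨆ i ≤ (0 : ℤ), g i) : Set L) s) :
    ∃! vw : (ℝ → L) × (ℝ → L),
      IsLoopIn (↑(⨆ i ≤ (-2 : ℤ), g i) : Set L) vw.1 ∧ IsLoopIn (↑C : Set L) vw.2 ∧
      ∀ x : ℝ, s x = deriv vw.1 x + B (q x + e) (vw.1 x) + vw.2 x := by
  classical
  haveI : DirectSum.Decomposition g := hg.chooseDecomposition
  -- notation
  set K : ℤ → Submodule ℂ L := fun d => ⨆ i ≤ d, g i with hK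
  -- the bottom of the grading
  have hfin : Set.Finite {i : ℤ | g i ≠ ⊥} :=
    Submodule.finite_ne_bot_of_iSupIndep hg.submodule_iSupIndep
  obtain ⟨m, hm⟩ : ∃ m : ℤ, ∀ i ∈ {i : ℤ | g i ≠ ⊥}, m ≤ i := by
    obtain ⟨m, hm⟩ := hfin.bddBelow
    exact ⟨m, hm⟩
  have hKbot : ∀ d : ℤ, d < m → K d = ⊥ := by
    intro d hd
    rw [hK]
    refine le_bot_iff.mp (iSup₂_le fun i hi => ?_)
    by_contra hne
    have : m ≤ i := hm i (by simpa [le_bot_iff] using hne)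
    omega
  obtain ⟨n, hn⟩ : ∃ n : ℕ, K (-2 - 2 * (n : ℤ)) = ⊥ := by
    refine ⟨m.natAbs + 1, hKbot (-2 - 2 * ((m.natAbs + 1 : ℕ) : ℤ)) ?_⟩
    omega
  -- injectivity of (a, c) ↦ B e a + c
  have hinj : ∀ a ∈ K (-2), ∀ c ∈ C, B e a + c = 0 → a = 0 ∧ c = 0 := by
    intro a ha c hc h0
    have hmem : B e a + c ∈ K (m - 1) := by
      rw [h0]; exact Submodule.zero_mem _
    obtain ⟨h1, h2⟩ := keyA g B hbr e he hgood C hCgraded hCdisj (m - 1) ha hc hmem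
    have h1' : a ∈ K (m - 1 - 2) := h1
    have h2' : c ∈ K (m - 1) := h2
    rw [hKbot _ (by omega), Submodule.mem_bot] at h1'
    rw [hKbot _ (by omega), Submodule.mem_bot] at h2'
    exact ⟨h1', h2'⟩
  obtain ⟨α, γ, hαmem, hγmem, hrecon⟩ := exists_alpha_gamma g B e C hinj hCsup
  obtain ⟨hqsm, hqper, hqmem⟩ := hq
  obtain ⟨hssm, hsper, hsmem⟩ := hs
  -- iteration
  set Φ : (ℝ → L) → (ℝ → L) :=
    fun v => fun x => α (s x - deriv v x - B (q x) (v x)) with hΦ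
  set iter : ℕ → (ℝ → L) := fun k => Φ^[k] (fun _ => 0) with hiter
  have hiter_succ : ∀ k, iter (k + 1) = Φ (iter k) := fun k =>
    Function.iterate_succ_apply' Φ k _
  -- basic properties of the iterates
  have hP : ∀ k, ContDiff ℝ (⊤ : ℕ∞) (iter k) ∧ (∀ x, iter k (x + 2 * Real.pi) = iter k x) ∧
      (∀ x, iter k x ∈ K (-2)) := by
    intro k
    induction k with
    | zero => exact ⟨contDiff_const, fun x => rfl, fun x => Submodule.zero_mem _⟩
    | succ k ih =>
      obtain ⟨ihsm, ihper, ihmem⟩ := ih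
      rw [hiter_succ]
      refine ⟨clm_smooth α ((hssm.sub (deriv_smooth ihsm)).sub
        (smooth_bapply B hqsm ihsm)), fun x => ?_, fun x => hαmem _⟩
      show α _ = α _
      rw [hsper, hqper, ihper, deriv_periodic ihper]
  -- contraction property
  have hQ : ∀ k : ℕ, ∀ x, iter (k + 1) x - iter k x ∈ K (-2 - 2 * (k : ℤ)) := by
    intro k
    induction k with
    | zero =>
      intro x
      have h0 : iter 1 x = α (s x) := by
        rw [hiter_succ]
        show α _ = _
        have hd : deriv (iter 0) x = 0 := by
          have : iter 0 = fun _ : ℝ => (0 : L) := rfl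
          rw [this, deriv_const]
        have hz : iter 0 x = 0 := rfl
        rw [hd, hz, map_zero, sub_zero, sub_zero]
      have : iter 0 x = 0 := rfl
      rw [h0, this, sub_zero]
      simpa using hαmem (s x)
    | succ k ih =>
      intro x
      -- difference of consecutive iterates
      set δ : ℝ → L := fun y => iter (k + 1) y - iter k y with hδ
      have hδsm : ContDiff ℝ (⊤ : ℕ∞) δ := (hP (k + 1)).1.sub (hP k).1
      have hδmem : ∀ y, δ y ∈ K (-2 - 2 * (k : ℤ)) := ih
      have hder : ∀ y, deriv δ y = deriv (iter (k + 1)) y - deriv (iter k) y := by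
        intro y
        exact deriv_fun_sub ((hP (k + 1)).1.differentiable (by simp) y)
          ((hP k).1.differentiable (by simp) y)
      have e1 : iter (k + 2) x
          = α (s x - deriv (iter (k + 1)) x - B (q x) (iter (k + 1) x)) := by
        rw [hiter_succ]
      have e2 : iter (k + 1) x
          = α (s x - deriv (iter k) x - B (q x) (iter k x)) := by
        rw [hiter_succ]
      have hb : B (q x) (δ x) = B (q x) (iter (k + 1) x) - B (q x) (iter k x) := by
        rw [hδ]; exact map_sub _ _ _
      have hdiff : iter (k + 2) x - iter (k + 1) x
          = α ((s x - deriv (iter (k + 1)) x - B (q x) (iter (k + 1) x))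
              - (s x - deriv (iter k) x - B (q x) (iter k x))) := by
        rw [map_sub, ← e1, ← e2]
      have harg : (s x - deriv (iter (k + 1)) x - B (q x) (iter (k + 1) x))
              - (s x - deriv (iter k) x - B (q x) (iter k x))
          = -(deriv δ x) - B (q x) (δ x) := by
        rw [hder x, hb]
        abel
      rw [hdiff, harg]
      -- membership computations
      have humem : -(deriv δ x) - B (q x) (δ x) ∈ K (-2 - 2 * (k : ℤ)) := by
        refine Submodule.sub_mem _ (Submodule.neg_mem _ ?_) ?_
        · exact deriv_mem_aux _ hδmem x
        · have := Bgrade g B hbr 0 (-2 - 2 * (k : ℤ)) (hCle (hqmem x)) (hδmem x)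
          rwa [zero_add] at this
      set u : L := -(deriv δ x) - B (q x) (δ x) with hu
      have huK0 : u ∈ K 0 := biSup_mono' g (by omega) humem
      have hre : B e (α u) + γ u = u := hrecon u huK0
      have := (keyA g B hbr e he hgood C hCgraded hCdisj (-2 - 2 * (k : ℤ))
        (hαmem u) (hγmem u) (hre.symm ▸ humem)).1
      have heq : (-2 - 2 * ((k : ℤ) + 1)) = -2 - 2 * (k : ℤ) - 2 := by ring
      rw [show ((k + 1 : ℕ) : ℤ) = (k : ℤ) + 1 by push_cast; ring, heq]
      exact this
  -- the fixed point
  set v : ℝ → L := iter n with hv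
  have hfix : iter (n + 1) = iter n := by
    funext x
    have := hQ n x
    rw [hn, Submodule.mem_bot] at this
    exact sub_eq_zero.mp this
  have hveq : ∀ x, v x = α (s x - deriv v x - B (q x) (v x)) := by
    intro x
    conv_lhs => rw [hv, ← hfix, hiter_succ]
  set w : ℝ → L := fun x => γ (s x - deriv v x - B (q x) (v x)) with hw
  obtain ⟨hvsm, hvper, hvmem⟩ := hP n
  rw [← hv] at hvsm hvper hvmem
  -- the constructed pair is a solution
  have hNmem : ∀ x, s x - deriv v x - B (q x) (v x) ∈ K 0 := by
    intro x
    refine Submodule.sub_mem _ (Submodule.sub_mem _ (hsmem x) ?_) ?_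
    · exact biSup_mono' g (by omega) (deriv_mem_aux _ hvmem x)
    · refine biSup_mono' g (show (0 : ℤ) + -2 ≤ 0 by omega) ?_
      exact Bgrade g B hbr 0 (-2) (hCle (hqmem x)) (hvmem x)
  have hsol : ∀ x, s x = deriv v x + B (q x + e) (v x) + w x := by
    intro x
    have hre := hrecon _ (hNmem x)
    rw [← hveq x] at hre
    have hadd : B (q x + e) (v x) = B (q x) (v x) + B e (v x) := by
      rw [map_add, LinearMap.add_apply]
    rw [hadd]
    linear_combination (norm := abel) -hre
  have hwsm : ContDiff ℝ (⊤ : ℕ∞) w :=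
    clm_smooth γ ((hssm.sub (deriv_smooth hvsm)).sub (smooth_bapply B hqsm hvsm))
  have hwper : ∀ x, w (x + 2 * Real.pi) = w x := by
    intro x
    show γ _ = γ _
    rw [hsper, hqper, hvper, deriv_periodic hvper]
  -- uniqueness
  have huniq : ∀ v₁ w₁ v₂ w₂ : ℝ → L,
      IsLoopIn (↑(K (-2)) : Set L) v₁ → IsLoopIn (↑C : Set L) w₁ →
      IsLoopIn (↑(K (-2)) : Set L) v₂ → IsLoopIn (↑C : Set L) w₂ →
      (∀ x, s x = deriv v₁ x + B (q x + e) (v₁ x) + w₁ x) →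
      (∀ x, s x = deriv v₂ x + B (q x + e) (v₂ x) + w₂ x) →
      v₁ = v₂ ∧ w₁ = w₂ := by
    intro v₁ w₁ v₂ w₂ h1 h1' h2 h2' he1 he2
    set δ : ℝ → L := fun y => v₁ y - v₂ y with hδ
    have hδmem : ∀ y, δ y ∈ K (-2) := fun y =>
      Submodule.sub_mem _ (h1.2.2 y) (h2.2.2 y)
    have hder : ∀ y, deriv δ y = deriv v₁ y - deriv v₂ y := fun y =>
      deriv_fun_sub (h1.1.differentiable (by simp) y) (h2.1.differentiable (by simp) y)
    have heqn : ∀ x, B e (δ x) + (w₁ x - w₂ x) = -(deriv δ x) - B (q x) (δ x) := by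
      intro x
      have h3 : deriv v₁ x + B (q x + e) (v₁ x) + w₁ x
          = deriv v₂ x + B (q x + e) (v₂ x) + w₂ x := by
        rw [← he1 x, ← he2 x]
      have hadd1 : B (q x + e) (v₁ x) = B (q x) (v₁ x) + B e (v₁ x) := by
        rw [map_add, LinearMap.add_apply]
      have hadd2 : B (q x + e) (v₂ x) = B (q x) (v₂ x) + B e (v₂ x) := by
        rw [map_add, LinearMap.add_apply]
      rw [hadd1, hadd2] at h3
      rw [hder x, hδ]
      simp only [map_sub]
      linear_combination (norm := abel) h3
    have hind : ∀ k : ℕ, ∀ x, δ x ∈ K (-2 - 2 * (k : ℤ)) := by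
      intro k
      induction k with
      | zero => intro x; simpa using hδmem x
      | succ k ih =>
        intro x
        have hwmem : w₁ x - w₂ x ∈ C := Submodule.sub_mem _ (h1'.2.2 x) (h2'.2.2 x)
        have hrmem : -(deriv δ x) - B (q x) (δ x) ∈ K (-2 - 2 * (k : ℤ)) := by
          refine Submodule.sub_mem _ (Submodule.neg_mem _ ?_) ?_
          · exact deriv_mem_aux _ ih x
          · have := Bgrade g B hbr 0 (-2 - 2 * (k : ℤ)) (hCle (hqmem x)) (ih x)
            rwa [zero_add] at this
        have := (keyA g B hbr e he hgood C hCgraded hCdisj (-2 - 2 * (k : ℤ))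
          (hδmem x) hwmem ((heqn x).symm ▸ hrmem)).1
        rw [show ((k + 1 : ℕ) : ℤ) = (k : ℤ) + 1 by push_cast; ring,
          show (-2 - 2 * ((k : ℤ) + 1)) = -2 - 2 * (k : ℤ) - 2 by ring]
        exact this
    have hδ0 : ∀ x, δ x = 0 := by
      intro x
      have := hind n x
      rw [hn, Submodule.mem_bot] at this
      exact this
    have hveq : v₁ = v₂ := funext fun x => sub_eq_zero.mp (hδ0 x)
    refine ⟨hveq, funext fun x => ?_⟩
    have := he1 x
    rw [he2 x, hveq] at this
    linear_combination (norm := abel) -this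
  -- conclusion
  refine ⟨(v, w), ⟨⟨hvsm, hvper, hvmem⟩, ⟨hwsm, hwper, fun x => hγmem _⟩, hsol⟩, ?_⟩
  rintro ⟨v₁, w₁⟩ ⟨hl1, hl2, hl3⟩
  obtain ⟨hv12, hw12⟩ := huniq v₁ w₁ v w hl1 hl2 ⟨hvsm, hvper, hvmem⟩
    ⟨hwsm, hwper, fun x => hγmem _⟩ hl3 hsol
  exact Prod.ext hv12 hw12
end

section
/- Let n ≥ 1 and let ξ, q : ℝ → M_n(ℂ) be C^∞ maps into the n×n complex matrices. Fix x ∈ ℝ and define G(t, y) = exp(−t ξ(y)) (matrix exponential). Then the map t ↦ G(t,x) · q(x) · G(t,x)⁻¹ − (∂G/∂y)(t, x) · G(t,x)⁻¹ is differentiable at t = 0 with derivative equal to ξ′(x) + [q(x), ξ(x)], where [A,B] = AB − BA and ξ′ is the derivative of ξ. -/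
open scoped Matrix

attribute [local instance] Matrix.frobeniusNormedAddCommGroup Matrix.frobeniusNormedSpace

attribute [local instance] Matrix.frobeniusNormedRing Matrix.frobeniusNormedAlgebra

/-- Computation (4.12) of the fundamental vector field of the gauge action
`Ψ : q ↦ n q n⁻¹ − n_x n⁻¹`: for smooth matrix-valued maps `ξ, q` and
`G(t, y) = exp(−t ξ(y))` (so `G(t,x)⁻¹ = exp(t ξ(x))`), the map
`t ↦ G(t,x) q(x) G(t,x)⁻¹ − (∂G/∂y)(t,x) G(t,x)⁻¹` is differentiable at `t = 0`
with derivative `ξ′(x) + [q(x), ξ(x)]`. -/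
theorem gauge_action_fundamental_vector_field (n : ℕ) (hn : 1 ≤ n)
    (ξ q : ℝ → Matrix (Fin n) (Fin n) ℂ)
    (hξ : ContDiff ℝ (⊤ : ℕ∞) ξ) (hq : ContDiff ℝ (⊤ : ℕ∞) q) (x : ℝ) :
    HasDerivAt
      (fun t : ℝ =>
        NormedSpace.exp (-(t • ξ x)) * q x * NormedSpace.exp (t • ξ x) -
          (deriv fun y : ℝ => NormedSpace.exp (-(t • ξ y))) x *
            NormedSpace.exp (t • ξ x))
      (deriv ξ x + (q x * ξ x - ξ x * q x)) 0 := by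
  classical
  let M := Matrix (Fin n) (Fin n) ℂ
  letI : NormedAddCommGroup (ℝ × ℝ →L[ℝ] M) := ContinuousLinearMap.toNormedAddCommGroup
  letI : NormedSpace ℝ (ℝ × ℝ →L[ℝ] M) := ContinuousLinearMap.toNormedSpace
  have hexp : (NormedSpace.exp : M → M) = NormedSpace.exp :=
    rfl
  -- the two-variable map
  set F : ℝ × ℝ → M := fun p => NormedSpace.exp (-(p.1 • ξ p.2)) with hFdef
  have hexpCD : ContDiff ℝ (⊤ : ℕ∞) (NormedSpace.exp : M → M) :=
    contDiff_iff_contDiffAt.mpr fun y => (NormedSpace.exp_analytic y).contDiffAt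
  have hg : ContDiff ℝ (⊤ : ℕ∞) (fun p : ℝ × ℝ => -(p.1 • ξ p.2)) :=
    by fun_prop
  have hF : ContDiff ℝ (⊤ : ℕ∞) F := hexpCD.comp hg
  set f' := fderiv ℝ F with hf'def
  have hF' : ∀ p, HasFDerivAt F (f' p) p := fun p =>
    (hF.differentiable (by simp) p).hasFDerivAt
  set f'' := fderiv ℝ f' (0, x) with hf''def
  have hf'' : HasFDerivAt f' f'' (0, x) :=
    (((hF.fderiv_right (m := 1) (by exact WithTop.coe_le_coe.mpr le_top)).differentiable (by simp)) (0, x)).hasFDerivAt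
  have hsymm : f'' (1, 0) (0, 1) = f'' (0, 1) (1, 0) :=
    second_derivative_symmetric hF' hf'' _ _
  -- derivative in the `t` direction at a fixed `y`
  have hTdir : ∀ (t y : ℝ), HasDerivAt (fun s : ℝ => F (s, y)) (f' (t, y) ((1 : ℝ), (0 : ℝ))) t := by
    intro t y
    exact (hF' (t, y)).comp_hasDerivAt t ((hasDerivAt_id t).prodMk (hasDerivAt_const t y))
  -- derivative in the `y` direction at fixed `t`
  have hYdir : ∀ (t y : ℝ), HasDerivAt (fun y' : ℝ => F (t, y')) (f' (t, y) ((0 : ℝ), (1 : ℝ))) y := by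
    intro t y
    exact (hF' (t, y)).comp_hasDerivAt y ((hasDerivAt_const y t).prodMk (hasDerivAt_id y))
  -- explicit t-derivative at t = 0 : it is `-ξ y`
  have hTexp : ∀ y : ℝ, HasDerivAt (fun s : ℝ => F (s, y)) (-ξ y) 0 := by
    intro y
    have h1 : HasDerivAt (fun u : ℝ => NormedSpace.exp (u • (-ξ y)))
        (NormedSpace.exp ((0 : ℝ) • (-ξ y)) * (-ξ y)) 0 :=
      hasDerivAt_exp_smul_const (𝔸 := M) (-ξ y) (0 : ℝ)
    simp only [zero_smul, NormedSpace.exp_zero, one_mul, smul_neg] at h1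
    simpa [hFdef] using h1
  have hTval : ∀ y : ℝ, f' (0, y) ((1 : ℝ), (0 : ℝ)) = -ξ y := fun y =>
    (hTdir 0 y).unique (hTexp y)
  -- second mixed derivative equals `-ξ'(x)`
  have hMixed1 : HasDerivAt (fun y : ℝ => f' (0, y) ((1 : ℝ), (0 : ℝ))) (f'' (0, 1) ((1 : ℝ), (0 : ℝ))) x := by
    have h1 : HasDerivAt (fun y : ℝ => f' (0, y)) (f'' ((0 : ℝ), (1 : ℝ))) x :=
      by have := hf''.comp_hasDerivAt x ((hasDerivAt_const x (0 : ℝ)).prodMk (hasDerivAt_id' (x := x))); exact this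
    exact (ContinuousLinearMap.apply ℝ M ((1 : ℝ), (0 : ℝ))).hasFDerivAt.comp_hasDerivAt x h1
  have hMixed2 : HasDerivAt (fun y : ℝ => -ξ y) (-(deriv ξ x)) x :=
    ((hξ.differentiable (by simp) x).hasDerivAt).neg
  have hMixedVal : f'' ((0 : ℝ), (1 : ℝ)) ((1 : ℝ), (0 : ℝ)) = -(deriv ξ x) := by
    have : HasDerivAt (fun y : ℝ => -ξ y) (f'' ((0 : ℝ), (1 : ℝ)) ((1 : ℝ), (0 : ℝ))) x := by
      refine hMixed1.congr_of_eventuallyEq ?_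
      filter_upwards with y using (hTval y).symm
    exact this.unique hMixed2
  -- the map h : t ↦ (∂F/∂y)(t, x) and its derivative at 0
  have hh : HasDerivAt (fun t : ℝ => f' (t, x) ((0 : ℝ), (1 : ℝ))) (-(deriv ξ x)) 0 := by
    have h1 : HasDerivAt (fun t : ℝ => f' (t, x)) (f'' ((1 : ℝ), (0 : ℝ))) 0 :=
      by have := hf''.comp_hasDerivAt 0 ((hasDerivAt_id' (x := (0 : ℝ))).prodMk (hasDerivAt_const 0 x)); exact this
    have h2 := (ContinuousLinearMap.apply ℝ M ((0 : ℝ), (1 : ℝ))).hasFDerivAt.comp_hasDerivAt 0 h1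
    have h3 : HasDerivAt (fun t : ℝ => f' (t, x) ((0 : ℝ), (1 : ℝ))) (f'' ((1 : ℝ), (0 : ℝ)) ((0 : ℝ), (1 : ℝ))) 0 := h2
    simpa [hsymm, hMixedVal] using h3
  -- h 0 = 0
  have hh0 : f' ((0 : ℝ), x) ((0 : ℝ), (1 : ℝ)) = 0 := by
    have hconst : HasDerivAt (fun y' : ℝ => F (0, y')) (0 : M) x := by
      have : (fun y' : ℝ => F (0, y')) = fun _ : ℝ => (1 : M) := by
        funext y'
        simp [hFdef]
      rw [this]
      exact hasDerivAt_const x 1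
    exact (hYdir 0 x).unique hconst
  -- the exponentials in t at x
  have hA : HasDerivAt (fun t : ℝ => F (t, x)) (-ξ x) 0 := hTexp x
  have hB : HasDerivAt (fun t : ℝ => NormedSpace.exp (t • ξ x)) (ξ x) 0 := by
    have h1 := hasDerivAt_exp_smul_const (𝔸 := M) (ξ x) (0 : ℝ)
    simp at h1
    exact h1
  -- assemble
  have key : HasDerivAt
      (fun t : ℝ => F (t, x) * q x * NormedSpace.exp (t • ξ x) -
        f' (t, x) ((0 : ℝ), (1 : ℝ)) * NormedSpace.exp (t • ξ x))
      (deriv ξ x + (q x * ξ x - ξ x * q x)) 0 := by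
    have hA0 : F ((0 : ℝ), x) = 1 := by simp [hFdef]
    have hB0 : NormedSpace.exp ((0 : ℝ) • ξ x) = (1 : M) := by simp
    have t1 : HasDerivAt (fun t : ℝ => F (t, x) * q x * NormedSpace.exp (t • ξ x))
        ((-ξ x * q x) * NormedSpace.exp ((0 : ℝ) • ξ x) +
          (F ((0 : ℝ), x) * q x) * ξ x) 0 := (hA.mul_const (q x)).mul hB
    have t2 : HasDerivAt (fun t : ℝ => f' (t, x) ((0 : ℝ), (1 : ℝ)) * NormedSpace.exp (t • ξ x))
        ((-(deriv ξ x)) * NormedSpace.exp ((0 : ℝ) • ξ x) +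
          f' ((0 : ℝ), x) ((0 : ℝ), (1 : ℝ)) * ξ x) 0 := hh.mul hB
    have := t1.sub t2
    rw [hA0, hB0, hh0] at this
    convert this using 1 <;> first | rfl | noncomm_ring
  have hfun : (fun t : ℝ =>
        NormedSpace.exp (-(t • ξ x)) * q x * NormedSpace.exp (t • ξ x) -
          (deriv fun y : ℝ => NormedSpace.exp (-(t • ξ y))) x *
            NormedSpace.exp (t • ξ x)) =
      (fun t : ℝ => F (t, x) * q x * NormedSpace.exp (t • ξ x) -
        f' (t, x) ((0 : ℝ), (1 : ℝ)) * NormedSpace.exp (t • ξ x)) := by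
    funext t
    rw [← hexp]
    congr 1
    congr 1
    exact (hYdir t x).deriv
  rw [hfun]
  exact key
end
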